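/- Fix q ∈ V and, for each p ∈ V, a function j_p : V → ℝ satisfying Δ j_p = 1_p − 1_q and j_p(q) = 0. For a function η : V → ℝ the following are equivalent (this characterizes the weight functionals representing the grevlex order <_q for the ideal I_G, i.e. the Gröbner cone of M_G^q): (a) for every nonempty subset B ⊆ V with q ∉ B, ∑_{v∈V} η(v)·(Δ 1_B)(v) > 0; (b) there exist k ∈ ℝ and γ : V → ℝ with γ(p) > 0 for all p ∈ V such that η(v) = ∑_{p∈V} γ(p)·j_p(v) + k for every v ∈ V. -/
import Mathlib


open Finset

/-- The graph Laplacian acting on functions `V → R`: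
`(Δf)(v) = ∑_{w adjacent to v} (f(v) − f(w))`. -/
def lap {V : Type} [Fintype V] (G : SimpleGraph V) [DecidableRel G.Adj]
    {R : Type} [Ring R] (f : V → R) (v : V) : R :=
  ∑ w ∈ G.neighborFinset v, (f v - f w)

section Aux

variable {V : Type} [Fintype V] [DecidableEq V] (G : SimpleGraph V) [DecidableRel G.Adj]

omit [DecidableEq V] in
lemma swap_lemma (F : V → V → ℝ) :
    ∑ v, ∑ w ∈ G.neighborFinset v, F v w = ∑ v, ∑ w ∈ G.neighborFinset v, F w v := by
  exact Finset.sum_comm' (fun x y => by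
    simp [SimpleGraph.mem_neighborFinset, SimpleGraph.adj_comm])

omit [DecidableEq V] in
lemma lap_total (f : V → ℝ) : ∑ v, lap G f v = 0 := by
  have h := swap_lemma G (fun v w => f v - f w)
  simp only [lap] at *
  have h2 : ∑ v, ∑ w ∈ G.neighborFinset v, (f w - f v)
      = -∑ v, ∑ w ∈ G.neighborFinset v, (f v - f w) := by
    simp [neg_sub, ← Finset.sum_neg_distrib]
  linarith

omit [DecidableEq V] in
lemma lap_symm (f g : V → ℝ) :
    ∑ v, f v * lap G g v = ∑ v, g v * lap G f v := by
  have h1 : ∑ v, ∑ w ∈ G.neighborFinset v, f v * g w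
      = ∑ v, ∑ w ∈ G.neighborFinset v, g v * f w := by
    rw [swap_lemma]
    simp [mul_comm]
  simp only [lap, Finset.mul_sum, mul_sub, Finset.sum_sub_distrib]
  rw [h1]
  congr 1
  simp [mul_comm]

lemma sum_indicator_mul (B : Finset V) (f : V → ℝ) :
    ∑ v, (if v ∈ B then (1:ℝ) else 0) * f v = ∑ v ∈ B, f v := by
  simp [ite_mul, Finset.sum_ite_mem]

omit [DecidableEq V] in
lemma harmonic_const (hG : G.Connected) (f : V → ℝ) (hf : ∀ v, lap G f v = 0)
    (v w : V) : f v = f w := by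
  have key : ∀ a b, G.Adj a b → f a = f b := by
    have h1 : ∑ v, ∑ w ∈ G.neighborFinset v, f v * (f v - f w) = 0 := by
      have : ∀ v, ∑ w ∈ G.neighborFinset v, f v * (f v - f w) = f v * lap G f v := by
        intro v; rw [lap, Finset.mul_sum]
      simp [this, hf]
    have h2 : ∑ v, ∑ w ∈ G.neighborFinset v, f w * (f v - f w) = 0 := by
      rw [swap_lemma]
      have : ∀ v, ∑ w ∈ G.neighborFinset v, f v * (f w - f v)
          = -(f v * lap G f v) := by
        intro v; rw [lap, Finset.mul_sum, ← Finset.sum_neg_distrib]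
        congr 1; ext w; ring
      simp [this, hf]
    have hQ : ∑ v, ∑ w ∈ G.neighborFinset v, (f v - f w)^2 = 0 := by
      have : ∀ v w, (f v - f w)^2 = f v * (f v - f w) - f w * (f v - f w) := by
        intro v w; ring
      simp only [this, Finset.sum_sub_distrib, h1, h2, sub_zero]
    intro a b hab
    have hnn : ∀ v ∈ Finset.univ, (0:ℝ) ≤ ∑ w ∈ G.neighborFinset v, (f v - f w)^2 :=
      fun v _ => Finset.sum_nonneg (fun w _ => sq_nonneg _)
    have h3 := (Finset.sum_eq_zero_iff_of_nonneg hnn).mp hQ a (Finset.mem_univ a)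
    have h4 := (Finset.sum_eq_zero_iff_of_nonneg
      (fun w _ => sq_nonneg (f a - f w))).mp h3 b
      ((SimpleGraph.mem_neighborFinset G a b).mpr hab)
    have := sq_eq_zero_iff.mp h4
    linarith
  obtain ⟨p⟩ := hG.preconnected v w
  induction p with
  | nil => rfl
  | cons h p ih => rw [key _ _ h]; exact ih

omit [DecidableEq V] in
lemma lap_sub (f g : V → ℝ) (v : V) :
    lap G (fun u => f u - g u) v = lap G f v - lap G g v := by
  simp [lap, ← Finset.sum_sub_distrib]
  congr 1; ext w; ring

omit [DecidableEq V] in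
lemma lap_sum_comb (γ : V → ℝ) (j : V → V → ℝ) (v : V) :
    lap G (fun u => ∑ p, γ p * j p u) v = ∑ p, γ p * lap G (j p) v := by
  simp only [lap, Finset.mul_sum, mul_sub, ← Finset.sum_sub_distrib]
  exact Finset.sum_comm

omit [DecidableEq V] in
lemma lap_add_const (f : V → ℝ) (k : ℝ) (v : V) :
    lap G (fun u => f u + k) v = lap G f v := by
  simp [lap]

end Aux

theorem stmt1 (V : Type) [Fintype V] [Nonempty V] [DecidableEq V]
    (G : SimpleGraph V) [DecidableRel G.Adj] (hG : G.Connected)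
    (q : V) (j : V → V → ℝ)
    (hj : ∀ p v, lap G (j p) v =
      (if v = p then 1 else 0) - (if v = q then 1 else 0))
    (hjq : ∀ p, j p q = 0)
    (η : V → ℝ) :
    (∀ B : Finset V, B.Nonempty → q ∉ B →
        0 < ∑ v, η v * lap G (fun u => if u ∈ B then (1 : ℝ) else 0) v) ↔
    (∃ (k : ℝ) (γ : V → ℝ), (∀ p, 0 < γ p) ∧
        ∀ v, η v = (∑ p, γ p * j p v) + k) := by
  constructor
  · intro hA
    set γ : V → ℝ := fun p => if p = q then 1 else lap G η p with hγdef
    have hγ : ∀ p, p ≠ q → γ p = lap G η p := by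
      intro p hp; simp [hγdef, hp]
    have hγpos : ∀ p, 0 < γ p := by
      intro p
      by_cases hp : p = q
      · simp [hγdef, hp]
      · rw [hγ p hp]
        have h := hA {p} (Finset.singleton_nonempty p)
          (by simp; exact fun h => hp h.symm)
        rw [lap_symm] at h
        have heq : ∑ v, (if v ∈ ({p} : Finset V) then (1:ℝ) else 0) * lap G η v
            = lap G η p := by
          rw [sum_indicator_mul]; simp
        rwa [heq] at h
    have htot : ∑ p, lap G η p = 0 := lap_total G η
    set f : V → ℝ := fun v => η v - ∑ p, γ p * j p v with hfdef
    have hlapj : ∀ v, ∑ p, γ p * lap G (j p) v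
        = γ v - (if v = q then ∑ p, γ p else 0) := by
      intro v
      simp only [hj, mul_sub, mul_ite, mul_one, mul_zero, Finset.sum_sub_distrib]
      congr 1
      · simp [Finset.sum_ite_eq, eq_comm]
      · split <;> simp
    have hf : ∀ v, lap G f v = 0 := by
      intro v
      rw [hfdef]
      rw [lap_sub, lap_sum_comb, hlapj]
      by_cases hv : v = q
      · rw [if_pos hv, hv]
        have hsplit : ∑ p, γ p = γ q + ∑ p ∈ Finset.univ.erase q, γ p := by
          rw [← Finset.add_sum_erase _ _ (Finset.mem_univ q)]
        have hsplit2 : ∑ p, lap G η p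
            = lap G η q + ∑ p ∈ Finset.univ.erase q, lap G η p := by
          rw [← Finset.add_sum_erase _ _ (Finset.mem_univ q)]
        have herase : ∑ p ∈ Finset.univ.erase q, γ p
            = ∑ p ∈ Finset.univ.erase q, lap G η p := by
          apply Finset.sum_congr rfl
          intro p hp
          exact hγ p (Finset.ne_of_mem_erase hp)
        rw [hsplit, herase]
        have := hsplit2 ▸ htot
        linarith
      · rw [if_neg hv, hγ v hv]
        ring
    have hconst : ∀ v, f v = f q := fun v => harmonic_const G hG f hf v q
    refine ⟨η q, γ, hγpos, fun v => ?_⟩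
    have h1 := hconst v
    simp only [hfdef] at h1
    simp only [hjq, mul_zero, Finset.sum_const_zero, sub_zero] at h1
    linarith
  · rintro ⟨k, γ, hγpos, hη⟩ B hB hqB
    have hηeq : η = fun v => (∑ p, γ p * j p v) + k := funext hη
    subst hηeq
    rw [lap_symm, sum_indicator_mul]
    have hlap : ∀ v ∈ B, lap G (fun u => (∑ p, γ p * j p u) + k) v = γ v := by
      intro v hv
      rw [lap_add_const, lap_sum_comb]
      have hvq : v ≠ q := fun h => hqB (h ▸ hv)
      simp only [hj, mul_sub, mul_ite, mul_one, mul_zero, Finset.sum_sub_distrib,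
        if_neg hvq]
      simp [Finset.sum_ite_eq, eq_comm]
    rw [Finset.sum_congr rfl hlap]
    exact Finset.sum_pos (fun v _ => hγpos v) hB
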